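/- Assume k is a field and set m_j := y_j·∏_{I∈𝓘, j∉I} x_I for j ∈ {1,…,n−1}. The invariant elements of R that are Λ-homogeneous of degree H are exactly the elements Σ_{j=1}^{n−1} α_j·m_j with α_1,…,α_{n−1} ∈ k satisfying Σ_j α_j = 0. -/

import Mathlib

open MvPolynomial

noncomputable section

/-- The index set 𝓘: subsets `I ⊆ {1,…,n−1}` with `1 ≤ |I| ≤ n−4`. -/
abbrev Idx (n : ℕ) : Type := {I : Finset (Fin (n - 1)) // 1 ≤ I.card ∧ I.card ≤ n - 4}

/-- The variables of the Cox ring of `X_n`: the `y_i` and the `x_I`. -/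
abbrev Vars (n : ℕ) : Type := Fin (n - 1) ⊕ Idx n

variable (k : Type) [Field k]

/-- `R = k[y_1,…,y_{n−1},(x_I)_{I∈𝓘}]`, the Cox ring of the toric variety `X_n`. -/
abbrev R (n : ℕ) : Type := MvPolynomial (Vars n) k

/-- The variable `y_i`. -/
def yy (n : ℕ) (i : Fin (n - 1)) : R k n := X (Sum.inl i)

/-- The variable `x_I`. -/
def xx (n : ℕ) (I : Idx n) : R k n := X (Sum.inr I)

/-- `z_i = ∏_{I∈𝓘, i∈I} x_I`. -/
def zz (n : ℕ) (i : Fin (n - 1)) : R k n :=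
  ∏ I ∈ Finset.univ.filter (fun I : Idx n => i ∈ I.1), xx k n I

/-- The `k`-algebra homomorphism `τ : R → R[T]` with `τ(x_I) = x_I` and
`τ(y_i) = y_i + T·z_i`.  An element `f ∈ R` is invariant iff `τ f = Polynomial.C f`. -/
def τₐ (n : ℕ) : R k n →ₐ[k] Polynomial (R k n) :=
  aeval (Sum.elim
    (fun i => Polynomial.C (yy k n i) + Polynomial.X * Polynomial.C (zz k n i))
    (fun I => Polynomial.C (xx k n I)))

/-- `Λ = ℤ·H ⊕ ⨁_{I∈𝓘} ℤ·E_I`, the free abelian group on `H` and the `E_I`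
(identified with `Pic(X_n) = Pic(M̄_{0,n})`). -/
abbrev Pic (n : ℕ) : Type := (Unit ⊕ Idx n) →₀ ℤ

/-- The hyperplane class `H`. -/
def Hc (n : ℕ) : Pic n := Finsupp.single (Sum.inl ()) 1

/-- The exceptional class `E_I`. -/
def Ec (n : ℕ) (I : Idx n) : Pic n := Finsupp.single (Sum.inr I) 1

/-- The `Λ`-grading of `R`: `deg y_j = H − Σ_{I∈𝓘, j∉I} E_I` and `deg x_I = E_I`. -/
def wt (n : ℕ) : Vars n → Pic n :=
  Sum.elim
    (fun j => Hc n - ∑ I ∈ Finset.univ.filter (fun I : Idx n => j ∉ I.1), Ec n I)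
    (fun I => Ec n I)

/-- The monomial `m_j = y_j·∏_{I∈𝓘, j∉I} x_I`. -/
def mm (n : ℕ) (j : Fin (n - 1)) : R k n :=
  yy k n j * ∏ I ∈ Finset.univ.filter (fun I : Idx n => j ∉ I.1), xx k n I

-- ==================== auxiliary ====================

/-- The exponent vector of `m_j`. -/
def dd (n : ℕ) (j : Fin (n - 1)) : Vars n →₀ ℕ :=
  Finsupp.single (Sum.inl j) 1 +
    ∑ I ∈ Finset.univ.filter (fun I : Idx n => j ∉ I.1), Finsupp.single (Sum.inr I) 1

lemma dd_apply_inl (n : ℕ) (j i : Fin (n - 1)) :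
    dd n j (Sum.inl i) = if j = i then 1 else 0 := by
  classical
  simp [dd, Finsupp.single_apply, Finset.sum_apply']

lemma sum_single_inr_apply (n : ℕ) (P : Idx n → Prop) [DecidablePred P] (I : Idx n) :
    (∑ I' ∈ Finset.univ.filter P, Finsupp.single (Sum.inr I' : Vars n) (1 : ℕ)) (Sum.inr I)
      = if P I then 1 else 0 := by
  classical
  rw [Finsupp.finset_sum_apply]
  simp only [Finsupp.single_apply, Sum.inr.injEq]
  rw [Finset.sum_ite_eq' (Finset.univ.filter P) I (fun _ => (1:ℕ))]
  simp

lemma dd_apply_inr (n : ℕ) (j : Fin (n - 1)) (I : Idx n) :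
    dd n j (Sum.inr I) = if j ∉ I.1 then 1 else 0 := by
  classical
  rw [dd, Finsupp.add_apply, sum_single_inr_apply]
  simp [Finsupp.single_apply]

lemma dd_inj (n : ℕ) : Function.Injective (dd n) := by
  intro a b hab
  have := congrArg (fun g : Vars n →₀ ℕ => g (Sum.inl a)) hab
  simp only [dd_apply_inl] at this
  by_contra h
  simp [Ne.symm h] at this

lemma mm_eq_monomial (n : ℕ) (j : Fin (n - 1)) :
    mm k n j = monomial (dd n j) (1 : k) := by
  classical
  rw [mm, dd, yy, X, ← one_mul (1 : k), ← monomial_mul]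
  congr 1
  rw [one_mul]
  induction (Finset.univ.filter (fun I : Idx n => j ∉ I.1)) using Finset.cons_induction with
  | empty => simp
  | cons a s ha ih => rw [Finset.prod_cons, Finset.sum_cons, ih, xx, X, monomial_mul, one_mul]

lemma weight_single_one {σ M : Type*} [AddCommMonoid M] (w : σ → M) (v : σ) :
    Finsupp.weight w (Finsupp.single v 1) = w v := by
  rw [Finsupp.weight_apply, Finsupp.sum_single_index] <;> simp

lemma weight_dd (n : ℕ) (j : Fin (n - 1)) :
    Finsupp.weight (wt n) (dd n j) = Hc n := by
  rw [dd, map_add, map_sum, weight_single_one]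
  simp only [weight_single_one]
  simp [wt, Ec]

/-- pointwise evaluation of the weight. -/
lemma weight_apply_point (n : ℕ) (d : Vars n →₀ ℕ) (p : Unit ⊕ Idx n) :
    (Finsupp.weight (wt n) d) p = ∑ v : Vars n, (d v : ℤ) * (wt n v p) := by
  classical
  rw [Finsupp.weight_apply, Finsupp.sum, Finsupp.finset_sum_apply]
  rw [Finset.sum_subset (Finset.subset_univ d.support)]
  · apply Finset.sum_congr rfl
    intro v _
    simp [Finsupp.smul_apply, zsmul_eq_mul]
  · intro v _ hv
    simp only [Finsupp.notMem_support_iff] at hv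
    simp [hv]

lemma sum_Ec_apply (n : ℕ) (P : Idx n → Prop) [DecidablePred P] (I : Idx n) :
    (∑ I' ∈ Finset.univ.filter P, Ec n I') (Sum.inr I) = if P I then 1 else 0 := by
  classical
  rw [Finsupp.finset_sum_apply]
  simp only [Ec, Finsupp.single_apply, Sum.inr.injEq]
  rw [Finset.sum_ite_eq' (Finset.univ.filter P) I (fun _ => (1:ℤ))]
  simp

lemma wt_inl_inl (n : ℕ) (i : Fin (n - 1)) : wt n (Sum.inl i) (Sum.inl ()) = 1 := by
  classical
  simp [wt, Hc, Finsupp.sub_apply, Finsupp.finset_sum_apply, Ec, Finsupp.single_apply]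

lemma wt_inl_inr (n : ℕ) (i : Fin (n - 1)) (I : Idx n) :
    wt n (Sum.inl i) (Sum.inr I) = if i ∉ I.1 then -1 else 0 := by
  classical
  simp only [wt, Sum.elim_inl, Finsupp.sub_apply, sum_Ec_apply]
  simp [Hc, Finsupp.single_apply]
  split <;> simp

lemma wt_inr_inl (n : ℕ) (I : Idx n) : wt n (Sum.inr I) (Sum.inl ()) = 0 := by
  simp [wt, Ec, Finsupp.single_apply]

lemma wt_inr_inr (n : ℕ) (I I' : Idx n) :
    wt n (Sum.inr I) (Sum.inr I') = if I = I' then 1 else 0 := by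
  simp [wt, Ec, Finsupp.single_apply]

/-- Classification: the exponent vectors of weighted degree `H` are exactly the `dd j`. -/
lemma degree_H_classify (n : ℕ) (d : Vars n →₀ ℕ)
    (hd : Finsupp.weight (wt n) d = Hc n) : ∃ j, d = dd n j := by
  classical
  have h1 : ∑ i : Fin (n - 1), (d (Sum.inl i) : ℤ) = 1 := by
    have := congrArg (fun g : Pic n => g (Sum.inl ())) hd
    simp only [weight_apply_point, Hc, Finsupp.single_apply] at this
    rw [Fintype.sum_sum_type] at this
    simp only [wt_inl_inl, wt_inr_inl, mul_one, mul_zero, Finset.sum_const_zero, add_zero] at this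
    simpa using this
  have h1' : ∑ i : Fin (n - 1), d (Sum.inl i) = 1 := by exact_mod_cast h1
  obtain ⟨j, -, hj⟩ : ∃ j ∈ Finset.univ, d (Sum.inl j) ≠ 0 := by
    by_contra h
    push_neg at h
    rw [Finset.sum_eq_zero (fun i _ => h i (Finset.mem_univ i))] at h1'
    exact one_ne_zero h1'.symm
  have hrest : d (Sum.inl j) + ∑ i ∈ Finset.univ.erase j, d (Sum.inl i) = 1 := by
    have h := Finset.add_sum_erase Finset.univ (fun i => d (Sum.inl i)) (Finset.mem_univ j)
    rw [h1'] at h; exact h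
  have hdj : d (Sum.inl j) = 1 := by omega
  have hzero : ∀ i, i ≠ j → d (Sum.inl i) = 0 := by
    intro i hi
    have hsum0 : ∑ i ∈ Finset.univ.erase j, d (Sum.inl i) = 0 := by omega
    exact Finset.sum_eq_zero_iff.mp hsum0 i (Finset.mem_erase.mpr ⟨hi, Finset.mem_univ i⟩)
  refine ⟨j, ?_⟩
  ext v
  cases v with
  | inl i =>
      rw [dd_apply_inl]
      rcases eq_or_ne i j with rfl | hij
      · simpa using hdj
      · rw [if_neg (Ne.symm hij)]; exact hzero i hij
  | inr I =>
      rw [dd_apply_inr]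
      have := congrArg (fun g : Pic n => g (Sum.inr I)) hd
      simp only [weight_apply_point, Hc, Finsupp.single_apply] at this
      rw [Fintype.sum_sum_type] at this
      simp only [wt_inl_inr, wt_inr_inr] at this
      have hL : ∑ i : Fin (n - 1), (d (Sum.inl i) : ℤ) * (if i ∉ I.1 then -1 else 0)
          = if j ∉ I.1 then -1 else 0 := by
        rw [Finset.sum_eq_single j]
        · rw [hdj]; push_cast; ring
        · intro i _ hij; rw [hzero i hij]; push_cast; ring
        · intro h; exact absurd (Finset.mem_univ j) h
      have hR : ∑ I' : Idx n, (d (Sum.inr I') : ℤ) * (if I' = I then 1 else 0)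
          = (d (Sum.inr I) : ℤ) := by
        rw [Finset.sum_eq_single I] <;> simp_all
      rw [hL, hR] at this
      have : (d (Sum.inr I) : ℤ) = if j ∉ I.1 then 1 else 0 := by
        split at this <;> split <;> simp_all <;> omega
      split at this <;> split <;> simp_all

lemma P_ne_zero (n : ℕ) : (∏ I : Idx n, xx k n I) ≠ 0 := by
  rw [Finset.prod_ne_zero_iff]
  intro I _
  rw [xx]
  exact MvPolynomial.X_ne_zero _

lemma zz_mul (n : ℕ) (j : Fin (n - 1)) :
    zz k n j * ∏ I ∈ Finset.univ.filter (fun I : Idx n => j ∉ I.1), xx k n I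
      = ∏ I : Idx n, xx k n I := by
  classical
  rw [zz, Finset.prod_filter_mul_prod_filter_not]

lemma tau_mm (n : ℕ) (j : Fin (n - 1)) :
    τₐ k n (mm k n j)
      = Polynomial.C (mm k n j)
        + Polynomial.X * Polynomial.C (∏ I : Idx n, xx k n I) := by
  classical
  rw [mm, map_mul]
  have h1 : τₐ k n (yy k n j)
      = Polynomial.C (yy k n j) + Polynomial.X * Polynomial.C (zz k n j) := by
    simp [τₐ, yy]
  have h2 : τₐ k n (∏ I ∈ Finset.univ.filter (fun I : Idx n => j ∉ I.1), xx k n I)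
      = Polynomial.C (∏ I ∈ Finset.univ.filter (fun I : Idx n => j ∉ I.1), xx k n I) := by
    rw [map_prod, map_prod]
    apply Finset.prod_congr rfl
    intro I _
    simp [τₐ, xx]
  rw [h1, h2, add_mul, ← Polynomial.C_mul, mul_assoc, ← Polynomial.C_mul, zz_mul]

set_option maxHeartbeats 1000000 in
lemma tau_sum (n : ℕ) (α : Fin (n - 1) → k) :
    τₐ k n (∑ j, C (α j) * mm k n j)
      = Polynomial.C (∑ j, C (α j) * mm k n j)
        + Polynomial.X * Polynomial.C (C (∑ j, α j) * ∏ I : Idx n, xx k n I) := by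
  classical
  rw [map_sum]
  have hC : ∀ a : k, τₐ k n (C a) = Polynomial.C (C a) := by
    intro a
    rw [show (C a : R k n) = algebraMap k (R k n) a from rfl, AlgHom.commutes,
      Polynomial.algebraMap_apply]
  calc ∑ j, τₐ k n (C (α j) * mm k n j)
      = ∑ j, (Polynomial.C (C (α j) * mm k n j)
          + Polynomial.X * Polynomial.C (C (α j) * ∏ I : Idx n, xx k n I)) := by
        apply Finset.sum_congr rfl
        intro j _
        rw [map_mul, hC, tau_mm, mul_add, ← Polynomial.C_mul]
        congr 1
        rw [mul_left_comm, ← Polynomial.C_mul]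
    _ = Polynomial.C (∑ j, C (α j) * mm k n j)
        + Polynomial.X * Polynomial.C (C (∑ j, α j) * ∏ I : Idx n, xx k n I) := by
        rw [Finset.sum_add_distrib, ← map_sum, ← Finset.mul_sum, ← map_sum]
        congr 3
        rw [← Finset.sum_mul, ← map_sum]

/-- the invariant elements of `R` that are `Λ`-homogeneous of degree `H` are
exactly the combinations `Σ_j α_j·m_j` with `Σ_j α_j = 0`. -/
theorem stmt7 (n : ℕ) (hn : 5 ≤ n) (f : R k n) :
    (τₐ k n f = Polynomial.C f ∧ IsWeightedHomogeneous (wt n) f (Hc n))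
    ↔ ∃ α : Fin (n - 1) → k,
        (∑ j, α j = 0) ∧ f = ∑ j, C (α j) * mm k n j := by
  classical
  constructor
  · rintro ⟨hinv, hhom⟩
    set α : Fin (n - 1) → k := fun j => coeff (dd n j) f with hα
    have hf : f = ∑ j, C (α j) * mm k n j := by
      apply MvPolynomial.ext
      intro d
      rw [coeff_sum]
      simp only [mm_eq_monomial, C_mul_monomial, mul_one, coeff_monomial]
      by_cases hex : ∃ j, dd n j = d
      · obtain ⟨j₀, rfl⟩ := hex
        rw [Finset.sum_eq_single j₀]
        · simp [hα]
        · intro j _ hj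
          rw [if_neg (fun h => hj (dd_inj n h))]
        · intro h
          exact absurd (Finset.mem_univ j₀) h
      · have h0 : coeff d f = 0 := by
          by_contra h
          obtain ⟨j, hj⟩ := degree_H_classify n d (hhom h)
          exact hex ⟨j, hj.symm⟩
        rw [h0]
        symm
        apply Finset.sum_eq_zero
        intro j _
        rw [if_neg (fun h => hex ⟨j, h⟩)]
    refine ⟨α, ?_, hf⟩
    rw [hf, tau_sum] at hinv
    have h0 : Polynomial.X *
        Polynomial.C (C (∑ j, α j) * ∏ I : Idx n, xx k n I) = 0 := by
      exact (add_eq_left).mp hinv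
    rcases mul_eq_zero.mp h0 with h | h
    · exact absurd h Polynomial.X_ne_zero
    · have h1 : C (∑ j, α j) * ∏ I : Idx n, xx k n I = 0 := by
        exact_mod_cast Polynomial.C_eq_zero.mp h
      rcases mul_eq_zero.mp h1 with h2 | h2
      · exact_mod_cast MvPolynomial.C_eq_zero.mp h2
      · exact absurd h2 (P_ne_zero k n)
  · rintro ⟨α, hsum, rfl⟩
    constructor
    · rw [tau_sum, hsum]
      simp
    · have hj : ∀ j : Fin (n - 1),
          IsWeightedHomogeneous (wt n) (C (α j) * mm k n j) (Hc n) := by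
        intro j
        rw [mm_eq_monomial, C_mul_monomial, mul_one]
        exact isWeightedHomogeneous_monomial _ _ _ (weight_dd n j)
      rw [← mem_weightedHomogeneousSubmodule]
      exact Submodule.sum_mem _ fun j _ =>
        (mem_weightedHomogeneousSubmodule k (wt n) (Hc n) _).mpr (hj j)


end
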